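/- arXiv:2004.07310 — 3 statements merged into one kernel-verified Lean document; each statement's English description precedes it below -/
import Mathlib

section
/- For positive measurable Z, Z̃ defining posteriors π_Z, π_{Z̃}, the total variation distance satisfies the symmetric bound ‖π_Z − π_{Z̃}‖_tv ≤ 2 min{ ‖Z̃/Z − 1‖_{L¹(π_{Z̃})}, ‖Z/Z̃ − 1‖_{L¹(π_Z)} }. -/
open MeasureTheory Real
open scoped ENNReal NNReal

noncomputable section

/-- Normalizing constant `C_Z = ∫ exp(-Φ)/Z dμ`. -/
def CZ {Θ : Type*} [MeasurableSpace Θ] (μ : Measure Θ) (Φ Z : Θ → ℝ) : ℝ :=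
  ∫ θ, Real.exp (-Φ θ) / Z θ ∂μ

/-- The doubly-intractable posterior `π_Z` with `μ`-density `exp(-Φ)/(Z C_Z)`. -/
def post {Θ : Type*} [MeasurableSpace Θ] (μ : Measure Θ) (Φ Z : Θ → ℝ) : Measure Θ :=
  (ENNReal.ofReal (CZ μ Φ Z))⁻¹ •
    μ.withDensity (fun θ => ENNReal.ofReal (Real.exp (-Φ θ) / Z θ))

/-- Total variation distance `sup_{|f|_∞ ≤ 1} |E_{ν₁} f - E_{ν₂} f|`. -/
def tvDist {Θ : Type*} [MeasurableSpace Θ] (ν₁ ν₂ : Measure Θ) : ℝ :=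
  ⨆ f : {f : Θ → ℝ // Measurable f ∧ ∀ θ, |f θ| ≤ 1},
    |(∫ θ, f.1 θ ∂ν₁) - ∫ θ, f.1 θ ∂ν₂|

lemma integral_post {Θ : Type*} [MeasurableSpace Θ] (μ : Measure Θ) (Φ Z : Θ → ℝ)
    (hΦ : Measurable Φ) (hZ : Measurable Z) (hZpos : ∀ θ, 0 < Z θ) (f : Θ → ℝ) :
    ∫ θ, f θ ∂(post μ Φ Z) = (CZ μ Φ Z)⁻¹ * ∫ θ, f θ * (Real.exp (-Φ θ) / Z θ) ∂μ := by
  have hg : Measurable fun θ => Real.exp (-Φ θ) / Z θ :=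
    (Real.measurable_exp.comp hΦ.neg).div hZ
  have hgnn : ∀ θ, 0 ≤ Real.exp (-Φ θ) / Z θ :=
    fun θ => div_nonneg (Real.exp_pos _).le (hZpos θ).le
  have hd : (fun θ => ENNReal.ofReal (Real.exp (-Φ θ) / Z θ))
      = fun θ => ((Real.exp (-Φ θ) / Z θ).toNNReal : ℝ≥0∞) := rfl
  rw [post, integral_smul_measure, hd,
    integral_withDensity_eq_integral_smul hg.real_toNNReal f]
  have hCnn : 0 ≤ CZ μ Φ Z := integral_nonneg hgnn
  rw [ENNReal.toReal_inv, ENNReal.toReal_ofReal hCnn, smul_eq_mul]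
  congr 1
  apply integral_congr_ae
  filter_upwards with θ
  rw [NNReal.smul_def, smul_eq_mul, Real.coe_toNNReal _ (hgnn θ), mul_comm]

lemma real_est (a b I J D : ℝ) (ha : 0 < a) (hb : 0 < b)
    (h1 : |I - J| ≤ D) (h2 : |a - b| ≤ D) (h3 : |I| ≤ a) :
    |a⁻¹ * I - b⁻¹ * J| ≤ 2 * b⁻¹ * D := by
  have key : a⁻¹ * I - b⁻¹ * J = b⁻¹ * (I - J) + (b - a) * (a⁻¹ * b⁻¹) * I := by
    field_simp
    ring
  rw [key]
  refine le_trans (abs_add_le _ _) ?_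
  rw [abs_mul, abs_mul, abs_mul, abs_mul,
    abs_of_pos (inv_pos.2 hb), abs_of_pos (inv_pos.2 ha)]
  have hba : |b - a| ≤ D := by rw [abs_sub_comm]; exact h2
  have hD : 0 ≤ D := le_trans (abs_nonneg _) h1
  have e1 : b⁻¹ * |I - J| ≤ b⁻¹ * D := by
    exact mul_le_mul_of_nonneg_left h1 (inv_pos.2 hb).le
  have e2 : |b - a| * (a⁻¹ * b⁻¹) * |I| ≤ D * (a⁻¹ * b⁻¹) * a := by
    have := (inv_pos.2 ha).le
    have := (inv_pos.2 hb).le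
    gcongr
  have e3 : D * (a⁻¹ * b⁻¹) * a = b⁻¹ * D := by
    field_simp
  nlinarith [e1, e2]

lemma keybound {Θ : Type*} [MeasurableSpace Θ] (μ : Measure Θ) (Φ Z Zt : Θ → ℝ)
    (hΦ : Measurable Φ) (hZ : Measurable Z) (hZt : Measurable Zt)
    (hZpos : ∀ θ, 0 < Z θ) (hZtpos : ∀ θ, 0 < Zt θ)
    (hint : Integrable (fun θ => Real.exp (-Φ θ) / Z θ) μ)
    (hintt : Integrable (fun θ => Real.exp (-Φ θ) / Zt θ) μ)
    (hC : 0 < CZ μ Φ Z) (hCt : 0 < CZ μ Φ Zt)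
    (f : Θ → ℝ) (hf : Measurable f) (hfb : ∀ θ, |f θ| ≤ 1) :
    |(∫ θ, f θ ∂(post μ Φ Z)) - ∫ θ, f θ ∂(post μ Φ Zt)| ≤
      2 * (CZ μ Φ Zt)⁻¹ * ∫ θ, |Real.exp (-Φ θ) / Z θ - Real.exp (-Φ θ) / Zt θ| ∂μ := by
  set g : Θ → ℝ := fun θ => Real.exp (-Φ θ) / Z θ with hgdef
  set gt : Θ → ℝ := fun θ => Real.exp (-Φ θ) / Zt θ with hgtdef
  have hgnn : ∀ θ, 0 ≤ g θ := fun θ => div_nonneg (Real.exp_pos _).le (hZpos θ).le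
  have hfg : Integrable (fun θ => f θ * g θ) μ :=
    hint.bdd_mul (c := 1) hf.aestronglyMeasurable (Filter.Eventually.of_forall fun θ => by simpa using hfb θ)
  have hfgt : Integrable (fun θ => f θ * gt θ) μ :=
    hintt.bdd_mul (c := 1) hf.aestronglyMeasurable (Filter.Eventually.of_forall fun θ => by simpa using hfb θ)
  rw [integral_post μ Φ Z hΦ hZ hZpos f, integral_post μ Φ Zt hΦ hZt hZtpos f]
  have hsub : Integrable (fun θ => g θ - gt θ) μ := hint.sub hintt
  -- pointwise bound |f*(g-gt)| ≤ |g-gt|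
  have hptw : ∀ θ, |f θ * (g θ - gt θ)| ≤ |g θ - gt θ| := by
    intro θ
    rw [abs_mul]
    exact mul_le_of_le_one_left (abs_nonneg _) (hfb θ)
  have h1 : |(∫ θ, f θ * g θ ∂μ) - ∫ θ, f θ * gt θ ∂μ| ≤ ∫ θ, |g θ - gt θ| ∂μ := by
    rw [← integral_sub hfg hfgt]
    refine le_trans (by simpa only [Real.norm_eq_abs] using norm_integral_le_integral_norm (μ:=μ) (fun θ => f θ * g θ - f θ * gt θ)) ?_
    refine integral_mono ((hfg.sub hfgt).abs) hsub.abs ?_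
    intro θ
    simpa [mul_sub] using hptw θ
  have h2 : |CZ μ Φ Z - CZ μ Φ Zt| ≤ ∫ θ, |g θ - gt θ| ∂μ := by
    rw [CZ, CZ, ← integral_sub hint hintt]
    simpa using norm_integral_le_integral_norm (fun θ => g θ - gt θ)
  have h3 : |∫ θ, f θ * g θ ∂μ| ≤ CZ μ Φ Z := by
    refine le_trans (by simpa only [Real.norm_eq_abs] using norm_integral_le_integral_norm (μ:=μ) (fun θ => f θ * g θ)) ?_
    refine integral_mono hfg.abs hint ?_
    intro θ
    show |f θ * g θ| ≤ g θ
    rw [abs_mul, abs_of_nonneg (hgnn θ)]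
    exact mul_le_of_le_one_left (hgnn θ) (hfb θ)
  exact real_est _ _ _ _ _ hC hCt h1 h2 h3

theorem tv_stability_symmetric {Θ : Type*} [MeasurableSpace Θ] (μ : Measure Θ) [SigmaFinite μ]
    (Φ Z Zt : Θ → ℝ) (hΦ : Measurable Φ) (hZ : Measurable Z) (hZt : Measurable Zt)
    (hZpos : ∀ θ, 0 < Z θ) (hZtpos : ∀ θ, 0 < Zt θ)
    (hint : Integrable (fun θ => Real.exp (-Φ θ) / Z θ) μ)
    (hintt : Integrable (fun θ => Real.exp (-Φ θ) / Zt θ) μ)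
    (hC : 0 < CZ μ Φ Z) (hCt : 0 < CZ μ Φ Zt) :
    tvDist (post μ Φ Z) (post μ Φ Zt) ≤
      2 * min (∫ θ, |Zt θ / Z θ - 1| ∂(post μ Φ Zt)) (∫ θ, |Z θ / Zt θ - 1| ∂(post μ Φ Z)) := by
  set g : Θ → ℝ := fun θ => Real.exp (-Φ θ) / Z θ with hgdef
  set gt : Θ → ℝ := fun θ => Real.exp (-Φ θ) / Zt θ with hgtdef
  set D : ℝ := ∫ θ, |g θ - gt θ| ∂μ with hDdef
  -- identity for the first min argument
  have hA : (∫ θ, |Zt θ / Z θ - 1| ∂(post μ Φ Zt)) = (CZ μ Φ Zt)⁻¹ * D := by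
    rw [integral_post μ Φ Zt hΦ hZt hZtpos _]
    congr 1
    apply integral_congr_ae
    filter_upwards with θ
    rw [← abs_of_pos (div_pos (Real.exp_pos _) (hZtpos θ)), ← abs_mul]
    congr 1
    simp only [hgdef, hgtdef]
    field_simp [(hZpos θ).ne', (hZtpos θ).ne']
  have hB : (∫ θ, |Z θ / Zt θ - 1| ∂(post μ Φ Z)) = (CZ μ Φ Z)⁻¹ * D := by
    rw [integral_post μ Φ Z hΦ hZ hZpos _]
    congr 1
    rw [hDdef]
    apply integral_congr_ae
    filter_upwards with θ
    rw [← abs_of_pos (div_pos (Real.exp_pos _) (hZpos θ)), ← abs_mul, abs_sub_comm]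
    congr 1
    simp only [hgdef, hgtdef]
    field_simp [(hZpos θ).ne', (hZtpos θ).ne']
  have : Nonempty {f : Θ → ℝ // Measurable f ∧ ∀ θ, |f θ| ≤ 1} :=
    ⟨⟨fun _ => 0, measurable_const, fun θ => by simp⟩⟩
  apply ciSup_le
  intro f
  rw [hA, hB]
  rw [mul_min_of_nonneg _ _ (by norm_num : (0:ℝ) ≤ 2)]
  refine le_min ?_ ?_
  · rw [← mul_assoc]
    exact keybound μ Φ Z Zt hΦ hZ hZt hZpos hZtpos hint hintt hC hCt f.1 f.2.1 f.2.2
  · rw [← mul_assoc, abs_sub_comm]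
    have hDsymm : D = ∫ θ, |gt θ - g θ| ∂μ := by
      rw [hDdef]
      exact integral_congr_ae (Filter.Eventually.of_forall fun θ => abs_sub_comm _ _)
    rw [hDsymm]
    exact keybound μ Φ Zt Z hΦ hZt hZ hZtpos hZpos hintt hint hCt hC f.1 f.2.1 f.2.2
end
end

section
/- Let Z̃ : Ω × Θ → (0,∞) be a random function such that for P-almost all ω, ‖Z/Z̃(ω) − 1‖_{L²(π_Z)} ≤ 1 − ε for some ε ∈ (0,1). Then E W(π_Z, π_{Z̃(·)}) ≤ (2/ε) |π_Z|^{(2)} (∫_Θ E|Z(θ)/Z̃(·,θ) − 1|² π_Z(dθ))^{1/2}. -/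
open MeasureTheory Real
open scoped NNReal ENNReal

noncomputable section

/-- 1-Wasserstein distance via Kantorovich–Rubinstein duality. -/
def wass {Θ : Type*} [MeasurableSpace Θ] [PseudoMetricSpace Θ] (ν₁ ν₂ : Measure Θ) : ℝ :=
  ⨆ f : {f : Θ → ℝ // LipschitzWith 1 f},
    |(∫ θ, f.1 θ ∂ν₁) - ∫ θ, f.1 θ ∂ν₂|

/-- The moment quantity `|ν|^{(p)} = inf_{θ₀} (∫ d(θ₀,θ)^p ν(dθ))^{1/p}`. -/
def momp {Θ : Type*} [MeasurableSpace Θ] [PseudoMetricSpace Θ] (ν : Measure Θ) (p : ℝ) : ℝ :=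
  ⨅ θ₀ : Θ, (∫ θ, dist θ₀ θ ^ p ∂ν) ^ (1 / p)

namespace ExpWassAux

variable {α : Type*} [MeasurableSpace α] {ν : Measure α}

lemma integrable_mul_of_memL2 {u v : α → ℝ} (hu : MemLp u 2 ν) (hv : MemLp v 2 ν) :
    Integrable (fun x => u x * v x) ν := by
  have h : Integrable (fun x => ((u x + v x) ^ 2 - u x ^ 2 - v x ^ 2) / 2) ν :=
    (((hu.add hv).integrable_sq.sub hu.integrable_sq).sub hv.integrable_sq).div_const 2
  exact h.congr (Filter.Eventually.of_forall fun x => by ring)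

lemma cs_bound {u v : α → ℝ} (hu : MemLp u 2 ν) (hv : MemLp v 2 ν) :
    |∫ x, u x * v x ∂ν| ≤ Real.sqrt (∫ x, u x ^ 2 ∂ν) * Real.sqrt (∫ x, v x ^ 2 ∂ν) := by
  have h1 : |∫ x, u x * v x ∂ν| ≤ ∫ x, |u x| * |v x| ∂ν := by
    have := norm_integral_le_integral_norm (μ := ν) (f := fun x => u x * v x)
    simpa only [Real.norm_eq_abs, abs_mul] using this
  have hpq : Real.HolderConjugate 2 2 := Real.HolderConjugate.two_two
  have hu' : MemLp (fun x => |u x|) (ENNReal.ofReal 2) ν := by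
    simpa [Real.norm_eq_abs, ENNReal.ofReal_ofNat] using hu.norm
  have hv' : MemLp (fun x => |v x|) (ENNReal.ofReal 2) ν := by
    simpa [Real.norm_eq_abs, ENNReal.ofReal_ofNat] using hv.norm
  have h2 := integral_mul_le_Lp_mul_Lq_of_nonneg hpq
    (Filter.Eventually.of_forall fun x => abs_nonneg (u x))
    (Filter.Eventually.of_forall fun x => abs_nonneg (v x)) hu' hv'
  have eu : ∫ x, |u x| ^ (2 : ℝ) ∂ν = ∫ x, u x ^ 2 ∂ν :=
    integral_congr_ae (Filter.Eventually.of_forall fun x => by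
      show |u x| ^ (2 : ℝ) = u x ^ 2
      rw [Real.rpow_two, sq_abs])
  have ev : ∫ x, |v x| ^ (2 : ℝ) ∂ν = ∫ x, v x ^ 2 ∂ν :=
    integral_congr_ae (Filter.Eventually.of_forall fun x => by
      show |v x| ^ (2 : ℝ) = v x ^ 2
      rw [Real.rpow_two, sq_abs])
  rw [eu, ev, ← Real.sqrt_eq_rpow, ← Real.sqrt_eq_rpow] at h2
  exact h1.trans h2

end ExpWassAux

section PostLemmas

open ExpWassAux

variable {Θ : Type*} [MeasurableSpace Θ] {μ : Measure Θ} {Φ Z : Θ → ℝ}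

lemma post_integral (hd : Measurable (fun θ => Real.exp (-Φ θ) / Z θ))
    (hd0 : ∀ θ, 0 ≤ Real.exp (-Φ θ) / Z θ) (hC : 0 ≤ CZ μ Φ Z) (g : Θ → ℝ) :
    ∫ θ, g θ ∂(post μ Φ Z) = (CZ μ Φ Z)⁻¹ * ∫ θ, g θ * (Real.exp (-Φ θ) / Z θ) ∂μ := by
  have hwd : μ.withDensity (fun θ => ENNReal.ofReal (Real.exp (-Φ θ) / Z θ)) =
      μ.withDensity (fun θ => ((Real.toNNReal (Real.exp (-Φ θ) / Z θ) : ℝ≥0) : ℝ≥0∞)) := rfl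
  rw [post, integral_smul_measure, hwd,
    integral_withDensity_eq_integral_smul hd.real_toNNReal]
  rw [ENNReal.toReal_inv, ENNReal.toReal_ofReal hC, smul_eq_mul]
  congr 1
  refine integral_congr_ae (Filter.Eventually.of_forall fun θ => ?_)
  simp only [NNReal.smul_def, Real.coe_toNNReal _ (hd0 θ), smul_eq_mul]
  ring

lemma post_integrable_iff (hd : Measurable (fun θ => Real.exp (-Φ θ) / Z θ))
    (hd0 : ∀ θ, 0 ≤ Real.exp (-Φ θ) / Z θ) (hC : 0 < CZ μ Φ Z) (g : Θ → ℝ) :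
    Integrable g (post μ Φ Z) ↔
      Integrable (fun θ => g θ * (Real.exp (-Φ θ) / Z θ)) μ := by
  have hwd : μ.withDensity (fun θ => ENNReal.ofReal (Real.exp (-Φ θ) / Z θ)) =
      μ.withDensity (fun θ => ((Real.toNNReal (Real.exp (-Φ θ) / Z θ) : ℝ≥0) : ℝ≥0∞)) := rfl
  rw [post, integrable_smul_measure
      (by simp : (ENNReal.ofReal (CZ μ Φ Z))⁻¹ ≠ 0)
      (ENNReal.inv_ne_top.2 (ENNReal.ofReal_pos.mpr hC).ne'), hwd,
    integrable_withDensity_iff_integrable_smul hd.real_toNNReal]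
  refine integrable_congr (Filter.Eventually.of_forall fun θ => ?_)
  simp only [NNReal.smul_def, Real.coe_toNNReal _ (hd0 θ), smul_eq_mul]
  ring

lemma post_isProbability (hd : Measurable (fun θ => Real.exp (-Φ θ) / Z θ))
    (hd0 : ∀ θ, 0 ≤ Real.exp (-Φ θ) / Z θ) (hC : 0 < CZ μ Φ Z)
    (hint : Integrable (fun θ => Real.exp (-Φ θ) / Z θ) μ) :
    IsProbabilityMeasure (post μ Φ Z) := by
  constructor
  rw [post, Measure.smul_apply, withDensity_apply _ MeasurableSet.univ, smul_eq_mul,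
    Measure.restrict_univ,
    ← ofReal_integral_eq_lintegral_ofReal hint (Filter.Eventually.of_forall hd0)]
  exact ENNReal.inv_mul_cancel (ENNReal.ofReal_pos.mpr hC).ne' ENNReal.ofReal_ne_top

end PostLemmas

section DetBound

open ExpWassAux

lemma det_bound {Θ : Type*} [MetricSpace Θ] [Nonempty Θ]
    [MeasurableSpace Θ] [BorelSpace Θ] (μ : Measure Θ)
    (Φ Z Zt : Θ → ℝ)
    (hΦ : Measurable Φ) (hZ : Measurable Z) (hZt : Measurable Zt)
    (hZpos : ∀ θ, 0 < Z θ) (hZtpos : ∀ θ, 0 < Zt θ)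
    (hint : Integrable (fun θ => Real.exp (-Φ θ) / Z θ) μ)
    (hintt : Integrable (fun θ => Real.exp (-Φ θ) / Zt θ) μ)
    (hC : 0 < CZ μ Φ Z) (hCt : 0 < CZ μ Φ Zt)
    (hmom2 : ∀ θ₀ : Θ, Integrable (fun θ => dist θ₀ θ ^ (2 : ℝ)) (post μ Φ Z))
    {ε : ℝ} (hε0 : 0 < ε)
    (hg2 : Integrable (fun θ => (Z θ / Zt θ - 1) ^ 2) (post μ Φ Z))
    (hcl : Real.sqrt (∫ θ, (Z θ / Zt θ - 1) ^ 2 ∂(post μ Φ Z)) ≤ 1 - ε) :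
    wass (post μ Φ Z) (post μ Φ Zt) ≤
      (2 / ε) * momp (post μ Φ Z) 2 *
        Real.sqrt (∫ θ, (Z θ / Zt θ - 1) ^ 2 ∂(post μ Φ Z)) := by
  have hd : Measurable (fun θ => Real.exp (-Φ θ) / Z θ) := (hΦ.neg.exp).div hZ
  have hd0 : ∀ θ, 0 ≤ Real.exp (-Φ θ) / Z θ :=
    fun θ => div_nonneg (Real.exp_pos _).le (hZpos θ).le
  have hdt : Measurable (fun θ => Real.exp (-Φ θ) / Zt θ) := (hΦ.neg.exp).div hZt
  have hdt0 : ∀ θ, 0 ≤ Real.exp (-Φ θ) / Zt θ :=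
    fun θ => div_nonneg (Real.exp_pos _).le (hZtpos θ).le
  haveI hprob : IsProbabilityMeasure (post μ Φ Z) := post_isProbability hd hd0 hC hint
  haveI hprobt : IsProbabilityMeasure (post μ Φ Zt) := post_isProbability hdt hdt0 hCt hintt
  set pz := post μ Φ Z with hpzdef
  set pzt := post μ Φ Zt with hpztdef
  set g : Θ → ℝ := fun θ => Z θ / Zt θ - 1 with hgdef
  set s : ℝ := Real.sqrt (∫ θ, g θ ^ 2 ∂pz) with hsdef
  have hs0 : 0 ≤ s := Real.sqrt_nonneg _
  have hgm : Measurable g := (hZ.div hZt).sub measurable_const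
  have hgL2 : MemLp g 2 pz := (memLp_two_iff_integrable_sq hgm.aestronglyMeasurable).2 hg2
  have hgint : Integrable g pz := hgL2.integrable one_le_two
  -- |∫ g| ≤ s
  have habs_int : ∀ (u : Θ → ℝ), MemLp u 2 pz → |∫ θ, u θ ∂pz| ≤ Real.sqrt (∫ θ, u θ ^ 2 ∂pz) := by
    intro u huL2
    have := cs_bound (memLp_const (1 : ℝ)) huL2
    simpa using this
  have hI : |∫ θ, g θ ∂pz| ≤ s := habs_int g hgL2
  have hden : ε ≤ 1 + ∫ θ, g θ ∂pz := by
    have h1 := neg_le_of_abs_le hI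
    linarith
  have hden0 : (0 : ℝ) < 1 + ∫ θ, g θ ∂pz := lt_of_lt_of_le hε0 hden
  -- C_t = C * (1 + I)
  have hrint : Integrable (fun θ => g θ + 1) pz := hgint.add (integrable_const 1)
  have hCC : CZ μ Φ Zt = CZ μ Φ Z * (1 + ∫ θ, g θ ∂pz) := by
    have e1 : ∫ θ, (g θ + 1) ∂pz =
        (CZ μ Φ Z)⁻¹ * ∫ θ, (g θ + 1) * (Real.exp (-Φ θ) / Z θ) ∂μ :=
      post_integral hd hd0 hC.le _
    have e2 : ∫ θ, (g θ + 1) * (Real.exp (-Φ θ) / Z θ) ∂μ = CZ μ Φ Zt := by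
      rw [CZ]
      refine integral_congr_ae (Filter.Eventually.of_forall fun θ => ?_)
      show (Z θ / Zt θ - 1 + 1) * (Real.exp (-Φ θ) / Z θ) = Real.exp (-Φ θ) / Zt θ
      have h1 : Z θ / Zt θ - 1 + 1 = Z θ / Zt θ := by ring
      rw [h1, div_mul_div_comm, mul_comm (Zt θ) (Z θ),
        mul_div_mul_left _ _ (ne_of_gt (hZpos θ))]
    have e3 : ∫ θ, (g θ + 1) ∂pz = (∫ θ, g θ ∂pz) + 1 := by
      rw [integral_add hgint (integrable_const 1), integral_const]
      simp
    rw [e2] at e1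
    rw [e3] at e1
    field_simp at e1
    linarith [e1]
  -- bound each Lipschitz test function
  haveI : Nonempty {f : Θ → ℝ // LipschitzWith 1 f} :=
    ⟨⟨fun _ => 0, (LipschitzWith.const 0).weaken zero_le_one⟩⟩
  rw [wass]
  refine ciSup_le ?_
  rintro ⟨f, hf⟩
  show |(∫ θ, f θ ∂pz) - ∫ θ, f θ ∂pzt| ≤ 2 / ε * momp pz 2 * s
  have key : ∀ θ₀ : Θ, |(∫ θ, f θ ∂pz) - ∫ θ, f θ ∂pzt| ≤
      (2 / ε * s) * ((∫ θ, dist θ₀ θ ^ (2 : ℝ) ∂pz) ^ ((1 : ℝ) / 2)) := by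
    intro θ₀
    set c0 : ℝ := f θ₀ with hc0
    set h : Θ → ℝ := fun θ => f θ - c0 with hhdef
    set d : Θ → ℝ := fun θ => dist θ₀ θ with hddef
    have hfm : Measurable f := hf.continuous.measurable
    have hhm : Measurable h := hfm.sub measurable_const
    have hhd : ∀ θ, |h θ| ≤ d θ := by
      intro θ
      have h1 : |f θ - f θ₀| ≤ dist θ θ₀ := by
        have := hf.dist_le_mul θ θ₀
        simpa [Real.dist_eq] using this
      show |f θ - c0| ≤ dist θ₀ θ
      rw [dist_comm]
      exact h1
    have hdm : Measurable d := (continuous_const.dist continuous_id).measurable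
    have hd2 : Integrable (fun θ => d θ ^ 2) pz := by
      simpa [Real.rpow_two] using hmom2 θ₀
    have hdL2 : MemLp d 2 pz := (memLp_two_iff_integrable_sq hdm.aestronglyMeasurable).2 hd2
    have hh2 : Integrable (fun θ => h θ ^ 2) pz := by
      refine hd2.mono ((hhm.pow_const 2).aestronglyMeasurable) ?_
      refine Filter.Eventually.of_forall fun θ => ?_
      rw [Real.norm_eq_abs, Real.norm_eq_abs, abs_pow, abs_pow]
      exact pow_le_pow_left₀ (abs_nonneg _) ((hhd θ).trans (le_abs_self _)) 2
    have hhL2 : MemLp h 2 pz := (memLp_two_iff_integrable_sq hhm.aestronglyMeasurable).2 hh2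
    have hhint : Integrable h pz := hhL2.integrable one_le_two
    have hhg : Integrable (fun θ => h θ * g θ) pz := integrable_mul_of_memL2 hhL2 hgL2
    have hhr : Integrable (fun θ => h θ * (g θ + 1)) pz := by
      refine (hhg.add hhint).congr (Filter.Eventually.of_forall fun θ => ?_)
      show h θ * g θ + h θ = h θ * (g θ + 1)
      ring
    set A : ℝ := ∫ θ, h θ ∂pz with hA
    set I : ℝ := ∫ θ, g θ ∂pz with hIdef
    set Bq : ℝ := ∫ θ, h θ * g θ ∂pz with hBq
    have e_hr : ∫ θ, h θ * (g θ + 1) ∂pz = Bq + A := by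
      rw [← integral_add hhg hhint]
      exact integral_congr_ae (Filter.Eventually.of_forall fun θ => by ring)
    -- pointwise density identity
    have hdens : ∀ u : Θ → ℝ, ∀ θ, u θ * (Real.exp (-Φ θ) / Zt θ) =
        (u θ * (g θ + 1)) * (Real.exp (-Φ θ) / Z θ) := by
      intro u θ
      show u θ * (Real.exp (-Φ θ) / Zt θ) =
        u θ * (Z θ / Zt θ - 1 + 1) * (Real.exp (-Φ θ) / Z θ)
      have h1 : Z θ / Zt θ - 1 + 1 = Z θ / Zt θ := by ring
      rw [h1, mul_assoc, div_mul_div_comm, mul_comm (Zt θ) (Z θ),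
        mul_div_mul_left _ _ (ne_of_gt (hZpos θ))]
    have hhintt : Integrable h pzt := by
      rw [hpztdef, post_integrable_iff hdt hdt0 hCt]
      have := (post_integrable_iff hd hd0 hC (fun θ => h θ * (g θ + 1))).1 (by rwa [← hpzdef])
      exact this.congr (Filter.Eventually.of_forall fun θ => (hdens h θ).symm)
    have e_ht : ∫ θ, h θ ∂pzt = (1 + I)⁻¹ * (Bq + A) := by
      have e1 : ∫ θ, h θ ∂pzt = (CZ μ Φ Zt)⁻¹ * ∫ θ, h θ * (Real.exp (-Φ θ) / Zt θ) ∂μ := by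
        rw [hpztdef]; exact post_integral hdt hdt0 hCt.le _
      have e2 : ∫ θ, (h θ * (g θ + 1)) ∂pz =
          (CZ μ Φ Z)⁻¹ * ∫ θ, (h θ * (g θ + 1)) * (Real.exp (-Φ θ) / Z θ) ∂μ := by
        rw [hpzdef]; exact post_integral hd hd0 hC.le _
      have e4 : ∫ θ, h θ * (Real.exp (-Φ θ) / Zt θ) ∂μ =
          ∫ θ, (h θ * (g θ + 1)) * (Real.exp (-Φ θ) / Z θ) ∂μ :=
        integral_congr_ae (Filter.Eventually.of_forall fun θ => hdens h θ)
      rw [e1, e4, hCC]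
      rw [e_hr] at e2
      have hJ : ∫ θ, (h θ * (g θ + 1)) * (Real.exp (-Φ θ) / Z θ) ∂μ =
          CZ μ Φ Z * (Bq + A) := by
        rw [e2, ← mul_assoc, mul_inv_cancel₀ (ne_of_gt hC), one_mul]
      rw [hJ]
      calc (CZ μ Φ Z * (1 + I))⁻¹ * (CZ μ Φ Z * (Bq + A))
          = (CZ μ Φ Z)⁻¹ * CZ μ Φ Z * ((1 + I)⁻¹ * (Bq + A)) := by
            rw [mul_inv]; ring
      _ = (1 + I)⁻¹ * (Bq + A) := by
            rw [inv_mul_cancel₀ (ne_of_gt hC), one_mul]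
    -- express integrals of f
    have hfint : Integrable f pz := hhint.add (integrable_const c0) |>.congr
      (Filter.Eventually.of_forall fun θ => by show h θ + c0 = f θ; simp [h])
    have hfintt : Integrable f pzt := hhintt.add (integrable_const c0) |>.congr
      (Filter.Eventually.of_forall fun θ => by show h θ + c0 = f θ; simp [h])
    have e_f : ∫ θ, f θ ∂pz = A + c0 := by
      have : ∫ θ, f θ ∂pz = ∫ θ, (h θ + c0) ∂pz :=
        integral_congr_ae (Filter.Eventually.of_forall fun θ => by show f θ = h θ + c0; simp [h])
      rw [this, integral_add hhint (integrable_const c0), integral_const]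
      simp [hA]
    have e_ft : ∫ θ, f θ ∂pzt = (1 + I)⁻¹ * (Bq + A) + c0 := by
      have : ∫ θ, f θ ∂pzt = ∫ θ, (h θ + c0) ∂pzt :=
        integral_congr_ae (Filter.Eventually.of_forall fun θ => by show f θ = h θ + c0; simp [h])
      rw [this, integral_add hhintt (integrable_const c0), integral_const, e_ht]
      simp
    -- the difference
    have ediff : (∫ θ, f θ ∂pz) - ∫ θ, f θ ∂pzt = (I * A - Bq) / (1 + I) := by
      rw [e_f, e_ft]
      field_simp
      ring
    -- bounds
    set md : ℝ := Real.sqrt (∫ θ, d θ ^ 2 ∂pz) with hmd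
    have hmd0 : 0 ≤ md := Real.sqrt_nonneg _
    have hhle : ∫ θ, h θ ^ 2 ∂pz ≤ ∫ θ, d θ ^ 2 ∂pz := by
      refine integral_mono hh2 hd2 fun θ => ?_
      calc h θ ^ 2 = |h θ| ^ 2 := (sq_abs _).symm
      _ ≤ d θ ^ 2 := pow_le_pow_left₀ (abs_nonneg _) (hhd θ) 2
    have hA_le : |A| ≤ md := (habs_int h hhL2).trans (Real.sqrt_le_sqrt hhle)
    have hB_le : |Bq| ≤ md * s := by
      have h1 := cs_bound hhL2 hgL2
      have h2 : Real.sqrt (∫ θ, h θ ^ 2 ∂pz) ≤ md := Real.sqrt_le_sqrt hhle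
      calc |Bq| ≤ Real.sqrt (∫ θ, h θ ^ 2 ∂pz) * Real.sqrt (∫ θ, g θ ^ 2 ∂pz) := h1
      _ ≤ md * s := by
          rw [← hsdef]
          exact mul_le_mul_of_nonneg_right h2 hs0
    have hnum : |I * A - Bq| ≤ 2 * (md * s) := by
      calc |I * A - Bq| ≤ |I * A| + |Bq| := abs_sub _ _
      _ = |I| * |A| + |Bq| := by rw [abs_mul]
      _ ≤ s * md + md * s := add_le_add (mul_le_mul hI hA_le (abs_nonneg _) hs0) hB_le
      _ = 2 * (md * s) := by ring
    have hfinal : |(∫ θ, f θ ∂pz) - ∫ θ, f θ ∂pzt| ≤ 2 * (md * s) / ε := by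
      rw [ediff, abs_div, abs_of_pos hden0]
      exact div_le_div₀ (by positivity) hnum hε0 hden
    -- identify md with the rpow expression
    have hmd_eq : (∫ θ, dist θ₀ θ ^ (2 : ℝ) ∂pz) ^ ((1 : ℝ) / 2) = md := by
      rw [hmd, Real.sqrt_eq_rpow]
      congr 1
      refine integral_congr_ae (Filter.Eventually.of_forall fun θ => ?_)
      show dist θ₀ θ ^ (2 : ℝ) = d θ ^ 2
      rw [Real.rpow_two]
    rw [hmd_eq]
    calc |(∫ θ, f θ ∂pz) - ∫ θ, f θ ∂pzt| ≤ 2 * (md * s) / ε := hfinal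
    _ = 2 / ε * s * md := by ring
  -- conclude with the infimum
  have hk0 : 0 ≤ 2 / ε * s := by positivity
  rcases hk0.eq_or_lt with hk | hk
  · have hs0' : s = 0 := by
      have h2ε : (2 : ℝ) / ε ≠ 0 := ne_of_gt (by positivity)
      rcases mul_eq_zero.1 hk.symm with h | h
      · exact absurd h h2ε
      · exact h
    have h0 := key (Classical.arbitrary Θ)
    rw [← hk, zero_mul] at h0
    rw [hs0', mul_zero]
    exact h0
  · have hdivle : ∀ θ₀ : Θ, |(∫ θ, f θ ∂pz) - ∫ θ, f θ ∂pzt| / (2 / ε * s) ≤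
        (∫ θ, dist θ₀ θ ^ (2 : ℝ) ∂pz) ^ ((1 : ℝ) / 2) := by
      intro θ₀
      rw [div_le_iff₀ hk]
      calc |(∫ θ, f θ ∂pz) - ∫ θ, f θ ∂pzt| ≤
          (2 / ε * s) * ((∫ θ, dist θ₀ θ ^ ((2 : ℝ)) ∂pz) ^ ((1 : ℝ) / 2)) := key θ₀
      _ = (∫ θ, dist θ₀ θ ^ ((2 : ℝ)) ∂pz) ^ ((1 : ℝ) / 2) * (2 / ε * s) := by ring
    have hM : |(∫ θ, f θ ∂pz) - ∫ θ, f θ ∂pzt| / (2 / ε * s) ≤ momp pz 2 :=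
      le_ciInf hdivle
    rw [div_le_iff₀ hk] at hM
    calc |(∫ θ, f θ ∂pz) - ∫ θ, f θ ∂pzt| ≤ momp pz 2 * (2 / ε * s) := hM
    _ = 2 / ε * momp pz 2 * s := by ring

end DetBound

theorem expected_wasserstein_stability_close {Θ : Type*} [MetricSpace Θ] [CompleteSpace Θ] [SecondCountableTopology Θ] [Nonempty Θ]
    [MeasurableSpace Θ] [BorelSpace Θ] (μ : Measure Θ) [SigmaFinite μ]
    {Ω : Type*} [MeasurableSpace Ω] (P : Measure Ω) [IsProbabilityMeasure P]
    (Φ Z : Θ → ℝ) (Zt : Ω → Θ → ℝ)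
    (hΦ : Measurable Φ) (hZ : Measurable Z)
    (hZt : Measurable (fun p : Ω × Θ => Zt p.1 p.2))
    (hZpos : ∀ θ, 0 < Z θ) (hZtpos : ∀ ω θ, 0 < Zt ω θ)
    (hint : Integrable (fun θ => Real.exp (-Φ θ) / Z θ) μ)
    (hintt : ∀ ω, Integrable (fun θ => Real.exp (-Φ θ) / Zt ω θ) μ)
    (hC : 0 < CZ μ Φ Z) (hCt : ∀ ω, 0 < CZ μ Φ (Zt ω))
    (hmom1 : ∀ θ₀ : Θ, Integrable (fun θ => dist θ₀ θ) (post μ Φ Z))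
    (hmom2 : ∀ θ₀ : Θ, Integrable (fun θ => dist θ₀ θ ^ (2 : ℝ)) (post μ Φ Z))
    (ε : ℝ) (hε0 : 0 < ε) (hε1 : ε < 1)
    (hclose : ∀ᵐ ω ∂P,
      (∫ θ, |Z θ / Zt ω θ - 1| ^ 2 ∂(post μ Φ Z)) ^ ((1 : ℝ) / 2) ≤ 1 - ε)
    (hL2 : ∀ θ, Integrable (fun ω => (Z θ / Zt ω θ - 1) ^ 2) P)
    (hintθ : Integrable (fun θ => ∫ ω, (Z θ / Zt ω θ - 1) ^ 2 ∂P) (post μ Φ Z)) :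
    ∫ ω, wass (post μ Φ Z) (post μ Φ (Zt ω)) ∂P ≤
      (2 / ε) * momp (post μ Φ Z) 2 *
        Real.sqrt (∫ θ, (∫ ω, (Z θ / Zt ω θ - 1) ^ 2 ∂P) ∂(post μ Φ Z)) := by
  classical
  have hd : Measurable (fun θ => Real.exp (-Φ θ) / Z θ) := (hΦ.neg.exp).div hZ
  have hd0 : ∀ θ, 0 ≤ Real.exp (-Φ θ) / Z θ :=
    fun θ => div_nonneg (Real.exp_pos _).le (hZpos θ).le
  haveI hprob : IsProbabilityMeasure (post μ Φ Z) := post_isProbability hd hd0 hC hint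
  have hsect : ∀ ω, Measurable (fun θ => Zt ω θ) :=
    fun ω => hZt.comp measurable_prodMk_left
  -- joint measurability of the squared ratio deviation
  have hGm : Measurable (fun p : Ω × Θ => (Z p.2 / Zt p.1 p.2 - 1) ^ 2) :=
    (((hZ.comp measurable_snd).div hZt).sub measurable_const).pow_const 2
  have hq : Measurable (fun p : Ω × Θ => ENNReal.ofReal ((Z p.2 / Zt p.1 p.2 - 1) ^ 2)) :=
    hGm.ennreal_ofReal
  set F : Ω → ℝ≥0∞ :=
    fun ω => ∫⁻ θ, ENNReal.ofReal ((Z θ / Zt ω θ - 1) ^ 2) ∂(post μ Φ Z) with hFdef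
  have hFm : Measurable F :=
    Measurable.lintegral_prod_right
      (f := fun ω θ => ENNReal.ofReal ((Z θ / Zt ω θ - 1) ^ 2)) hq
  have hswap : ∫⁻ ω, F ω ∂P =
      ∫⁻ θ, ∫⁻ ω, ENNReal.ofReal ((Z θ / Zt ω θ - 1) ^ 2) ∂P ∂(post μ Φ Z) :=
    lintegral_lintegral_swap hq.aemeasurable
  have hinner : ∀ θ, ENNReal.ofReal (∫ ω, (Z θ / Zt ω θ - 1) ^ 2 ∂P) =
      ∫⁻ ω, ENNReal.ofReal ((Z θ / Zt ω θ - 1) ^ 2) ∂P :=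
    fun θ => ofReal_integral_eq_lintegral_ofReal (hL2 θ)
      (Filter.Eventually.of_forall fun ω => sq_nonneg _)
  have houter : ENNReal.ofReal (∫ θ, (∫ ω, (Z θ / Zt ω θ - 1) ^ 2 ∂P) ∂(post μ Φ Z)) =
      ∫⁻ θ, ∫⁻ ω, ENNReal.ofReal ((Z θ / Zt ω θ - 1) ^ 2) ∂P ∂(post μ Φ Z) := by
    rw [ofReal_integral_eq_lintegral_ofReal hintθ
      (Filter.Eventually.of_forall fun θ => integral_nonneg fun ω => sq_nonneg _)]
    exact lintegral_congr fun θ => hinner θ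
  set T : ℝ≥0∞ :=
    ∫⁻ θ, ∫⁻ ω, ENNReal.ofReal ((Z θ / Zt ω θ - 1) ^ 2) ∂P ∂(post μ Φ Z) with hTdef
  have hTtop : T ≠ ⊤ := by rw [← houter]; exact ENNReal.ofReal_ne_top
  have hFT : ∫⁻ ω, F ω ∂P = T := hswap
  have hFfin : ∀ᵐ ω ∂P, F ω < ⊤ := ae_lt_top hFm (by rw [hFT]; exact hTtop)
  set s : Ω → ℝ := fun ω => Real.sqrt ((F ω).toReal) with hsdef
  have hsm : Measurable s := (ENNReal.measurable_toReal.comp hFm).sqrt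
  have hsq : ∀ ω, s ω ^ 2 = (F ω).toReal := fun ω => Real.sq_sqrt ENNReal.toReal_nonneg
  -- integrability of ω ↦ (F ω).toReal
  have hFnorm : ∀ᵐ ω ∂P, (‖(F ω).toReal‖₊ : ℝ≥0∞) = F ω := by
    filter_upwards [hFfin] with ω hω
    rw [← enorm_eq_nnnorm, ← ofReal_norm, Real.norm_of_nonneg ENNReal.toReal_nonneg,
      ENNReal.ofReal_toReal hω.ne]
  have hint2 : Integrable (fun ω => (F ω).toReal) P := by
    refine ⟨(ENNReal.measurable_toReal.comp hFm).aestronglyMeasurable, ?_⟩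
    rw [HasFiniteIntegral]
    calc ∫⁻ ω, (‖(F ω).toReal‖₊ : ℝ≥0∞) ∂P = ∫⁻ ω, F ω ∂P := lintegral_congr_ae hFnorm
    _ = T := hFT
    _ < ⊤ := hTtop.lt_top
  have hsL2 : MemLp s 2 P :=
    (memLp_two_iff_integrable_sq hsm.aestronglyMeasurable).2
      (hint2.congr (Filter.Eventually.of_forall fun ω => (hsq ω).symm))
  have hsint : Integrable s P := hsL2.integrable one_le_two
  -- value of ∫ s² over P
  have hs2int : Integrable (fun ω => s ω ^ 2) P :=
    hint2.congr (Filter.Eventually.of_forall fun ω => (hsq ω).symm)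
  have hs2val : ∫ ω, s ω ^ 2 ∂P = ∫ θ, (∫ ω, (Z θ / Zt ω θ - 1) ^ 2 ∂P) ∂(post μ Φ Z) := by
    have h1 : ENNReal.ofReal (∫ ω, s ω ^ 2 ∂P) = ∫⁻ ω, ENNReal.ofReal (s ω ^ 2) ∂P :=
      ofReal_integral_eq_lintegral_ofReal hs2int
        (Filter.Eventually.of_forall fun ω => sq_nonneg _)
    have h2 : ∫⁻ ω, ENNReal.ofReal (s ω ^ 2) ∂P = T := by
      rw [← hFT]
      refine lintegral_congr_ae ?_
      filter_upwards [hFfin] with ω hω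
      rw [hsq, ENNReal.ofReal_toReal hω.ne]
    have h3 := h1.trans (h2.trans houter.symm)
    have := congrArg ENNReal.toReal h3
    rwa [ENNReal.toReal_ofReal (integral_nonneg fun ω => sq_nonneg _),
      ENNReal.toReal_ofReal (integral_nonneg fun θ => integral_nonneg fun ω => sq_nonneg _)]
      at this
  -- pointwise a.e. bound via det_bound
  have hptw : ∀ᵐ ω ∂P, wass (post μ Φ Z) (post μ Φ (Zt ω)) ≤
      (2 / ε) * momp (post μ Φ Z) 2 * s ω := by
    filter_upwards [hclose, hFfin] with ω hcl hfin
    have hgm : Measurable (fun θ => Z θ / Zt ω θ - 1) :=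
      (hZ.div (hsect ω)).sub measurable_const
    have hg2 : Integrable (fun θ => (Z θ / Zt ω θ - 1) ^ 2) (post μ Φ Z) := by
      refine ⟨(hgm.pow_const 2).aestronglyMeasurable, ?_⟩
      rw [HasFiniteIntegral]
      have : ∫⁻ θ, (‖(Z θ / Zt ω θ - 1) ^ 2‖₊ : ℝ≥0∞) ∂(post μ Φ Z) = F ω := by
        refine lintegral_congr fun θ => ?_
        rw [← enorm_eq_nnnorm, ← ofReal_norm, Real.norm_of_nonneg (sq_nonneg _)]
      exact lt_of_eq_of_lt this hfin
    have hval : ∫ θ, (Z θ / Zt ω θ - 1) ^ 2 ∂(post μ Φ Z) = (F ω).toReal := by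
      rw [integral_eq_lintegral_of_nonneg_ae
        (Filter.Eventually.of_forall fun θ => sq_nonneg _)
        (hgm.pow_const 2).aestronglyMeasurable]
    have hcl' : Real.sqrt (∫ θ, (Z θ / Zt ω θ - 1) ^ 2 ∂(post μ Φ Z)) ≤ 1 - ε := by
      have habs : ∫ θ, |Z θ / Zt ω θ - 1| ^ 2 ∂(post μ Φ Z) =
          ∫ θ, (Z θ / Zt ω θ - 1) ^ 2 ∂(post μ Φ Z) :=
        integral_congr_ae (Filter.Eventually.of_forall fun θ => sq_abs _)
      rw [Real.sqrt_eq_rpow, ← habs]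
      exact hcl
    have hdet := det_bound μ Φ Z (Zt ω) hΦ hZ (hsect ω) hZpos (hZtpos ω) hint (hintt ω)
      hC (hCt ω) hmom2 hε0 hg2 hcl'
    rw [hval] at hdet
    exact hdet
  -- conclude
  have hw0 : ∀ᵐ ω ∂P, 0 ≤ wass (post μ Φ Z) (post μ Φ (Zt ω)) :=
    Filter.Eventually.of_forall fun ω => Real.iSup_nonneg fun f => abs_nonneg _
  have hM0 : 0 ≤ momp (post μ Φ Z) 2 := by
    refine Real.iInf_nonneg fun θ₀ => ?_
    exact Real.rpow_nonneg (integral_nonneg fun θ => Real.rpow_nonneg dist_nonneg _) _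
  have hMb : 0 ≤ (2 / ε) * momp (post μ Φ Z) 2 := mul_nonneg (by positivity) hM0
  have hbint : Integrable (fun ω => (2 / ε) * momp (post μ Φ Z) 2 * s ω) P :=
    hsint.const_mul _
  calc ∫ ω, wass (post μ Φ Z) (post μ Φ (Zt ω)) ∂P
      ≤ ∫ ω, (2 / ε) * momp (post μ Φ Z) 2 * s ω ∂P :=
        integral_mono_of_nonneg hw0 hbint hptw
  _ = (2 / ε) * momp (post μ Φ Z) 2 * ∫ ω, s ω ∂P := integral_const_mul _ _
  _ ≤ (2 / ε) * momp (post μ Φ Z) 2 * Real.sqrt (∫ ω, s ω ^ 2 ∂P) := by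
      refine mul_le_mul_of_nonneg_left ?_ hMb
      have hcs := ExpWassAux.cs_bound (memLp_const (1 : ℝ)) hsL2
      simp only [one_mul, one_pow] at hcs
      have h1 : ∫ ω, (1 : ℝ) ∂P = 1 := by simp
      rw [h1, Real.sqrt_one, one_mul] at hcs
      exact (le_abs_self _).trans hcs
  _ = (2 / ε) * momp (post μ Φ Z) 2 *
        Real.sqrt (∫ θ, (∫ ω, (Z θ / Zt ω θ - 1) ^ 2 ∂P) ∂(post μ Φ Z)) := by
      rw [hs2val]
end
end

section
/- In the simple Monte Carlo recovery setting with ℓ(θ) ≤ ρ(x,θ) ≤ u(θ) for all (x,θ), the expected total variation error satisfies E‖π_Z − π_{Z̃_N(·)}‖_tv ≤ (2/√N) ‖u/ℓ‖_{L¹(π_Z)}. -/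
open MeasureTheory Real

noncomputable section

open scoped NNReal ENNReal

lemma integral_post_eq {Θ : Type*} [MeasurableSpace Θ] (μ : Measure Θ) (Φ Z : Θ → ℝ)
    (hd : Measurable (fun θ => Real.exp (-Φ θ) / Z θ))
    (hnn : ∀ θ, 0 ≤ Real.exp (-Φ θ) / Z θ)
    (hC : 0 < CZ μ Φ Z) (g : Θ → ℝ) :
    ∫ θ, g θ ∂(post μ Φ Z)
      = (CZ μ Φ Z)⁻¹ * ∫ θ, (Real.exp (-Φ θ) / Z θ) * g θ ∂μ := by
  have hcoe : (fun θ => ENNReal.ofReal (Real.exp (-Φ θ) / Z θ))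
      = fun θ => (((Real.exp (-Φ θ) / Z θ).toNNReal : ℝ≥0) : ℝ≥0∞) := rfl
  rw [post, integral_smul_measure, hcoe,
    integral_withDensity_eq_integral_smul hd.real_toNNReal g,
    ENNReal.toReal_inv, ENNReal.toReal_ofReal hC.le]
  simp only [smul_eq_mul]
  congr 1
  refine integral_congr_ae (Filter.Eventually.of_forall fun θ => ?_)
  simp [NNReal.smul_def, Real.coe_toNNReal _ (hnn θ)]

lemma integrable_post_iff {Θ : Type*} [MeasurableSpace Θ] (μ : Measure Θ) (Φ Z : Θ → ℝ)
    (hd : Measurable (fun θ => Real.exp (-Φ θ) / Z θ))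
    (hnn : ∀ θ, 0 ≤ Real.exp (-Φ θ) / Z θ)
    (hC : 0 < CZ μ Φ Z) (g : Θ → ℝ) :
    Integrable g (post μ Φ Z) ↔
      Integrable (fun θ => (Real.exp (-Φ θ) / Z θ) * g θ) μ := by
  rw [post, integrable_smul_measure (by simp [ENNReal.ofReal_ne_top])
    (by simp [ENNReal.ofReal_eq_zero, not_le, hC])]
  have hcoe : (fun θ => ENNReal.ofReal (Real.exp (-Φ θ) / Z θ))
      = fun θ => (((Real.exp (-Φ θ) / Z θ).toNNReal : ℝ≥0) : ℝ≥0∞) := rfl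
  rw [hcoe, integrable_withDensity_iff_integrable_smul hd.real_toNNReal]
  refine integrable_congr (Filter.Eventually.of_forall fun θ => ?_)
  simp [NNReal.smul_def, Real.coe_toNNReal _ (hnn θ)]

lemma abs_integral_le_integral_abs' {Θ : Type*} [MeasurableSpace Θ] {μ : Measure Θ}
    (f : Θ → ℝ) : |∫ θ, f θ ∂μ| ≤ ∫ θ, |f θ| ∂μ := by
  simpa [Real.norm_eq_abs] using norm_integral_le_integral_norm (μ := μ) f

lemma tvDist_post_le {Θ : Type*} [MeasurableSpace Θ] (μ : Measure Θ) (Φ : Θ → ℝ)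
    (Z₁ Z₂ : Θ → ℝ)
    (hd₁ : Measurable (fun θ => Real.exp (-Φ θ) / Z₁ θ))
    (hd₂ : Measurable (fun θ => Real.exp (-Φ θ) / Z₂ θ))
    (hnn₁ : ∀ θ, 0 ≤ Real.exp (-Φ θ) / Z₁ θ)
    (hnn₂ : ∀ θ, 0 ≤ Real.exp (-Φ θ) / Z₂ θ)
    (hi₁ : Integrable (fun θ => Real.exp (-Φ θ) / Z₁ θ) μ)
    (hi₂ : Integrable (fun θ => Real.exp (-Φ θ) / Z₂ θ) μ)
    (hC₁ : 0 < CZ μ Φ Z₁) (hC₂ : 0 < CZ μ Φ Z₂) :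
    tvDist (post μ Φ Z₁) (post μ Φ Z₂) ≤
      2 / CZ μ Φ Z₁ *
        ∫ θ, |Real.exp (-Φ θ) / Z₁ θ - Real.exp (-Φ θ) / Z₂ θ| ∂μ := by
  set h₁ : Θ → ℝ := fun θ => Real.exp (-Φ θ) / Z₁ θ with hh₁
  set h₂ : Θ → ℝ := fun θ => Real.exp (-Φ θ) / Z₂ θ with hh₂
  set C₁ := CZ μ Φ Z₁ with hC₁def
  set C₂ := CZ μ Φ Z₂ with hC₂def
  set D := ∫ θ, |h₁ θ - h₂ θ| ∂μ with hD
  have hDnn : 0 ≤ D := integral_nonneg fun θ => abs_nonneg _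
  have hDint : Integrable (fun θ => |h₁ θ - h₂ θ|) μ := (hi₁.sub hi₂).abs
  have hne : Nonempty {f : Θ → ℝ // Measurable f ∧ ∀ θ, |f θ| ≤ 1} :=
    ⟨⟨fun _ => 0, measurable_const, fun θ => by simp⟩⟩
  refine ciSup_le fun f => ?_
  obtain ⟨f, hfm, hfb⟩ := f
  have hif₁ : Integrable (fun θ => h₁ θ * f θ) μ := by
    refine hi₁.mono' ((hd₁.mul hfm).aestronglyMeasurable)
      (Filter.Eventually.of_forall fun θ => ?_)
    rw [Real.norm_eq_abs, abs_mul, abs_of_nonneg (hnn₁ θ)]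
    calc h₁ θ * |f θ| ≤ h₁ θ * 1 := by
          exact mul_le_mul_of_nonneg_left (hfb θ) (hnn₁ θ)
      _ = h₁ θ := mul_one _
  have hif₂ : Integrable (fun θ => h₂ θ * f θ) μ := by
    refine hi₂.mono' ((hd₂.mul hfm).aestronglyMeasurable)
      (Filter.Eventually.of_forall fun θ => ?_)
    rw [Real.norm_eq_abs, abs_mul, abs_of_nonneg (hnn₂ θ)]
    calc h₂ θ * |f θ| ≤ h₂ θ * 1 := mul_le_mul_of_nonneg_left (hfb θ) (hnn₂ θ)
      _ = h₂ θ := mul_one _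
  have e₁ : ∫ θ, f θ ∂(post μ Φ Z₁) = C₁⁻¹ * ∫ θ, h₁ θ * f θ ∂μ :=
    integral_post_eq μ Φ Z₁ hd₁ hnn₁ hC₁ f
  have e₂ : ∫ θ, f θ ∂(post μ Φ Z₂) = C₂⁻¹ * ∫ θ, h₂ θ * f θ ∂μ :=
    integral_post_eq μ Φ Z₂ hd₂ hnn₂ hC₂ f
  set I₁ := ∫ θ, h₁ θ * f θ ∂μ with hI₁def
  set I₂ := ∫ θ, h₂ θ * f θ ∂μ with hI₂def
  have habs₂ : |I₂| ≤ C₂ := by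
    calc |I₂| ≤ ∫ θ, |h₂ θ * f θ| ∂μ := abs_integral_le_integral_abs' _
      _ ≤ ∫ θ, h₂ θ ∂μ := by
          refine integral_mono hif₂.abs hi₂ fun θ => ?_
          rw [abs_mul, abs_of_nonneg (hnn₂ θ)]
          exact (mul_le_mul_of_nonneg_left (hfb θ) (hnn₂ θ)).trans_eq (mul_one _)
      _ = C₂ := rfl
  have hID : |I₁ - I₂| ≤ D := by
    have hsub : I₁ - I₂ = ∫ θ, (h₁ θ - h₂ θ) * f θ ∂μ := by
      rw [← integral_sub hif₁ hif₂]
      refine integral_congr_ae (Filter.Eventually.of_forall fun θ => ?_)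
      simp only [Pi.sub_apply]; ring
    rw [hsub]
    calc |∫ θ, (h₁ θ - h₂ θ) * f θ ∂μ| ≤ ∫ θ, |(h₁ θ - h₂ θ) * f θ| ∂μ :=
          abs_integral_le_integral_abs' _
      _ ≤ D := by
          refine integral_mono ((hif₁.sub hif₂).congr
            (Filter.Eventually.of_forall fun θ => by simp only [Pi.sub_apply]; ring)).abs
            hDint fun θ => ?_
          rw [abs_mul]
          exact (mul_le_mul_of_nonneg_left (hfb θ) (abs_nonneg _)).trans_eq (mul_one _)
  have hCC : |C₂ - C₁| ≤ D := by
    have : C₂ - C₁ = ∫ θ, (h₂ θ - h₁ θ) ∂μ := (integral_sub hi₂ hi₁).symm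
    rw [this]
    calc |∫ θ, (h₂ θ - h₁ θ) ∂μ| ≤ ∫ θ, |h₂ θ - h₁ θ| ∂μ := abs_integral_le_integral_abs' _
      _ = D := by rw [hD]; congr 1; funext θ; rw [abs_sub_comm]
  rw [e₁, e₂]
  have key : C₁⁻¹ * I₁ - C₂⁻¹ * I₂
      = C₁⁻¹ * (I₁ - I₂) + (C₂ - C₁) * C₁⁻¹ * (C₂⁻¹ * I₂) := by
    field_simp
    ring
  have hstep : |C₁⁻¹ * I₁ - C₂⁻¹ * I₂|
      ≤ C₁⁻¹ * |I₁ - I₂| + |C₂ - C₁| * C₁⁻¹ * |C₂⁻¹ * I₂| := by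
    rw [key]
    refine (abs_add_le _ _).trans ?_
    rw [abs_mul, abs_mul, abs_mul, abs_of_nonneg (inv_nonneg.2 hC₁.le)]
  have hlast : |C₂⁻¹ * I₂| ≤ 1 := by
    rw [abs_mul, abs_of_nonneg (inv_nonneg.2 hC₂.le)]
    calc C₂⁻¹ * |I₂| ≤ C₂⁻¹ * C₂ := mul_le_mul_of_nonneg_left habs₂ (inv_nonneg.2 hC₂.le)
      _ = 1 := inv_mul_cancel₀ hC₂.ne'
  calc |C₁⁻¹ * I₁ - C₂⁻¹ * I₂| ≤ C₁⁻¹ * |I₁ - I₂| + |C₂ - C₁| * C₁⁻¹ * |C₂⁻¹ * I₂| := hstep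
    _ ≤ C₁⁻¹ * D + D * C₁⁻¹ * 1 := by
        refine add_le_add (mul_le_mul_of_nonneg_left hID (inv_nonneg.2 hC₁.le)) ?_
        refine mul_le_mul ?_ hlast (abs_nonneg _) ?_
        · exact mul_le_mul_of_nonneg_right hCC (inv_nonneg.2 hC₁.le)
        · positivity
    _ = 2 / C₁ * D := by field_simp; ring

open ProbabilityTheory

theorem monte_carlo_expected_tv
    {Θ : Type*} [MeasurableSpace Θ] (μ : Measure Θ) [SigmaFinite μ]
    {G : Type*} [mG : MeasurableSpace G] {Ω : Type*} [MeasurableSpace Ω]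
    (P : Measure Ω) [IsProbabilityMeasure P]
    (ν : Θ → Measure G) (hν : ∀ θ, IsProbabilityMeasure (ν θ))
    (ρ : G → Θ → ℝ) (hρmeas : Measurable (fun p : G × Θ => ρ p.1 p.2))
    (ℓ u : Θ → ℝ) (hℓpos : ∀ θ, 0 < ℓ θ)
    (hbound : ∀ x θ, ℓ θ ≤ ρ x θ ∧ ρ x θ ≤ u θ)
    (Φ Z : Θ → ℝ) (hΦ : Measurable Φ) (hZ : ∀ θ, Z θ = ∫ x, ρ x θ ∂(ν θ))
    (X : ℕ → Θ → Ω → G) (hXmeas : ∀ j θ, Measurable (X j θ))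
    (hXiid : ∀ θ, iIndepFun (fun j => X j θ) P)
    (hXmap : ∀ j θ, Measure.map (X j θ) P = ν θ)
    (N : ℕ) (hN : 1 ≤ N)
    (hZNmeas : Measurable (fun p : Ω × Θ =>
      (N : ℝ)⁻¹ * ∑ j ∈ Finset.range N, ρ (X j p.2 p.1) p.2))
    (hint : Integrable (fun θ => Real.exp (-Φ θ) / Z θ) μ)
    (hC : 0 < CZ μ Φ Z)
    (hintN : ∀ ω, Integrable (fun θ => Real.exp (-Φ θ) /
      ((N : ℝ)⁻¹ * ∑ j ∈ Finset.range N, ρ (X j θ ω) θ)) μ)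
    (hCN : ∀ ω, 0 < CZ μ Φ (fun θ => (N : ℝ)⁻¹ * ∑ j ∈ Finset.range N, ρ (X j θ ω) θ))
    (hul : Integrable (fun θ => u θ / ℓ θ) (post μ Φ Z)) :
    ∫ ω, tvDist (post μ Φ Z)
        (post μ Φ (fun θ => (N : ℝ)⁻¹ * ∑ j ∈ Finset.range N, ρ (X j θ ω) θ)) ∂P ≤
      (2 / Real.sqrt N) * ∫ θ, u θ / ℓ θ ∂(post μ Φ Z) := by
  classical
  set Zt : Ω → Θ → ℝ :=
    fun ω θ => (N : ℝ)⁻¹ * ∑ j ∈ Finset.range N, ρ (X j θ ω) θ with hZtdef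
  show ∫ ω, tvDist (post μ Φ Z) (post μ Φ (Zt ω)) ∂P ≤
      2 / Real.sqrt N * ∫ θ, u θ / ℓ θ ∂(post μ Φ Z)
  have hNpos : (0:ℝ) < N := by exact_mod_cast Nat.lt_of_lt_of_le Nat.zero_lt_one hN
  have hsN : 0 < Real.sqrt N := Real.sqrt_pos.mpr hNpos
  have hρθ : ∀ θ, Measurable (fun x => ρ x θ) := fun θ =>
    hρmeas.comp (measurable_id.prodMk measurable_const)
  -- bounds on Z
  have hZb : ∀ θ, ℓ θ ≤ Z θ ∧ Z θ ≤ u θ := by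
    intro θ
    haveI := hν θ
    have hint' : Integrable (fun x => ρ x θ) (ν θ) := by
      refine (integrable_const (u θ)).mono' ((hρθ θ).aestronglyMeasurable)
        (Filter.Eventually.of_forall fun x => ?_)
      rw [Real.norm_eq_abs, abs_of_pos (lt_of_lt_of_le (hℓpos θ) (hbound x θ).1)]
      exact (hbound x θ).2
    constructor
    · calc ℓ θ = ∫ _, ℓ θ ∂(ν θ) := by simp
        _ ≤ ∫ x, ρ x θ ∂(ν θ) := integral_mono (integrable_const _) hint' fun x => (hbound x θ).1
        _ = Z θ := (hZ θ).symm
    · calc Z θ = ∫ x, ρ x θ ∂(ν θ) := hZ θ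
        _ ≤ ∫ _, u θ ∂(ν θ) := integral_mono hint' (integrable_const _) fun x => (hbound x θ).2
        _ = u θ := by simp
  have hZpos : ∀ θ, 0 < Z θ := fun θ => lt_of_lt_of_le (hℓpos θ) (hZb θ).1
  have hupos : ∀ θ, 0 < u θ := fun θ => lt_of_lt_of_le (hZpos θ) (hZb θ).2
  -- bounds on Zt
  have hZtb : ∀ ω θ, ℓ θ ≤ Zt ω θ ∧ Zt ω θ ≤ u θ := by
    intro ω θ
    constructor
    · have h1 : (N:ℝ) * ℓ θ ≤ ∑ j ∈ Finset.range N, ρ (X j θ ω) θ := by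
        have := Finset.card_nsmul_le_sum (Finset.range N)
          (fun j => ρ (X j θ ω) θ) (ℓ θ) (fun j _ => (hbound _ θ).1)
        simpa [Finset.card_range, nsmul_eq_mul] using this
      have h2 := mul_le_mul_of_nonneg_left h1 (inv_nonneg.2 hNpos.le)
      calc ℓ θ = (N:ℝ)⁻¹ * ((N:ℝ) * ℓ θ) := by field_simp
        _ ≤ Zt ω θ := h2
    · have h1 : ∑ j ∈ Finset.range N, ρ (X j θ ω) θ ≤ (N:ℝ) * u θ := by
        have := Finset.sum_le_card_nsmul (Finset.range N)
          (fun j => ρ (X j θ ω) θ) (u θ) (fun j _ => (hbound _ θ).2)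
        simpa [Finset.card_range, nsmul_eq_mul] using this
      have h2 := mul_le_mul_of_nonneg_left h1 (inv_nonneg.2 hNpos.le)
      calc Zt ω θ ≤ (N:ℝ)⁻¹ * ((N:ℝ) * u θ) := h2
        _ = u θ := by field_simp
  have hZtpos : ∀ ω θ, 0 < Zt ω θ := fun ω θ => lt_of_lt_of_le (hℓpos θ) (hZtb ω θ).1
  -- integrability and mean of ρ(X j θ ·)
  have hYmeas : ∀ j θ, Measurable (fun ω => ρ (X j θ ω) θ) := fun j θ =>
    (hρθ θ).comp (hXmeas j θ)
  have hYint : ∀ j θ, Integrable (fun ω => ρ (X j θ ω) θ) P := by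
    intro j θ
    refine (integrable_const (u θ)).mono' ((hYmeas j θ).aestronglyMeasurable)
      (Filter.Eventually.of_forall fun ω => ?_)
    rw [Real.norm_eq_abs, abs_of_pos (lt_of_lt_of_le (hℓpos θ) (hbound _ θ).1)]
    exact (hbound _ θ).2
  have hEY : ∀ j θ, ∫ ω, ρ (X j θ ω) θ ∂P = Z θ := by
    intro j θ
    rw [hZ θ, ← hXmap j θ,
      integral_map (hXmeas j θ).aemeasurable (hρθ θ).aestronglyMeasurable]
  have hZrep : ∀ θ, ∫ ω, Zt ω θ ∂P = Z θ := by
    intro θ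
    have h0 : ∫ ω, Zt ω θ ∂P
        = (N:ℝ)⁻¹ * ∫ ω, ∑ j ∈ Finset.range N, ρ (X j θ ω) θ ∂P :=
      integral_const_mul _ _
    rw [h0, integral_finset_sum _ (fun j _ => hYint j θ)]
    simp only [hEY, Finset.sum_const, Finset.card_range, nsmul_eq_mul]
    field_simp
  have hZmeas : Measurable Z := by
    have hm : StronglyMeasurable fun θ => ∫ ω, Zt ω θ ∂P :=
      StronglyMeasurable.integral_prod_left (f := Zt) hZNmeas.stronglyMeasurable
    have : Z = fun θ => ∫ ω, Zt ω θ ∂P := funext fun θ => (hZrep θ).symm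
    rw [this]; exact hm.measurable
  -- densities
  have hd₁ : Measurable (fun θ => Real.exp (-Φ θ) / Z θ) :=
    (Real.measurable_exp.comp hΦ.neg).div hZmeas
  have hnn₁ : ∀ θ, 0 ≤ Real.exp (-Φ θ) / Z θ := fun θ =>
    div_nonneg (Real.exp_pos _).le (hZpos θ).le
  have hZtsec : ∀ ω, Measurable (fun θ => Zt ω θ) := fun ω =>
    hZNmeas.comp measurable_prodMk_left
  have hd₂ : ∀ ω, Measurable (fun θ => Real.exp (-Φ θ) / Zt ω θ) := fun ω =>
    (Real.measurable_exp.comp hΦ.neg).div (hZtsec ω)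
  have hnn₂ : ∀ ω θ, 0 ≤ Real.exp (-Φ θ) / Zt ω θ := fun ω θ =>
    div_nonneg (Real.exp_pos _).le (hZtpos ω θ).le
  -- probabilistic estimate
  have hprob : ∀ θ, ∫ ω, |Zt ω θ - Z θ| / Zt ω θ ∂P
      ≤ u θ / ℓ θ * (Real.sqrt N)⁻¹ := by
    intro θ
    set Y : ℕ → Ω → ℝ := fun j ω => ρ (X j θ ω) θ with hYdef
    set S : Ω → ℝ := fun ω => Zt ω θ with hSdef
    have hSmeas : Measurable S := hZNmeas.comp measurable_prodMk_right
    have hYmem : ∀ j, MemLp (Y j) 2 P := by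
      intro j
      refine MemLp.of_bound ((hYmeas j θ).aestronglyMeasurable) (u θ)
        (Filter.Eventually.of_forall fun ω => ?_)
      rw [Real.norm_eq_abs, abs_of_pos (lt_of_lt_of_le (hℓpos θ) (hbound _ θ).1)]
      exact (hbound _ θ).2
    have hYindep : iIndepFun Y P :=
      (hXiid θ).comp (fun _ x => ρ x θ) (fun _ => hρθ θ)
    have hSmem : MemLp S 2 P := by
      refine MemLp.of_bound hSmeas.aestronglyMeasurable (u θ)
        (Filter.Eventually.of_forall fun ω => ?_)
      rw [Real.norm_eq_abs, abs_of_pos (hZtpos ω θ)]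
      exact (hZtb ω θ).2
    have hSint : Integrable S P := hSmem.integrable one_le_two
    have hES : ∫ ω, S ω ∂P = Z θ := hZrep θ
    have hVarY : ∀ j, variance (Y j) P ≤ u θ ^ 2 := by
      intro j
      rw [variance_eq_sub (hYmem j)]
      have h1 : (∫ ω, (Y j ^ 2) ω ∂P) ≤ u θ ^ 2 := by
        have e : ∫ ω, (Y j ^ 2) ω ∂P = ∫ ω, Y j ω ^ 2 ∂P :=
          integral_congr_ae (Filter.Eventually.of_forall fun ω => by simp)
        rw [e]
        refine (integral_mono ((hYmem j).integrable_sq) (integrable_const (u θ ^ 2))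
          fun ω => ?_).trans_eq (by simp)
        have h2 : |Y j ω| ≤ u θ := by
          rw [abs_of_pos (lt_of_lt_of_le (hℓpos θ) (hbound _ θ).1)]
          exact (hbound _ θ).2
        calc Y j ω ^ 2 = |Y j ω| ^ 2 := (sq_abs _).symm
          _ ≤ u θ ^ 2 := pow_le_pow_left₀ (abs_nonneg _) h2 2
      nlinarith [sq_nonneg (∫ ω, Y j ω ∂P)]
    have hvarsum : variance (∑ j ∈ Finset.range N, Y j) P
        = ∑ j ∈ Finset.range N, variance (Y j) P :=
      ProbabilityTheory.IndepFun.variance_sum (fun j _ => hYmem j)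
        (fun i _ j _ hij => hYindep.indepFun hij)
    have hSsum : S = (N:ℝ)⁻¹ • ∑ j ∈ Finset.range N, Y j := by
      funext ω
      simp [hSdef, hZtdef, Finset.sum_apply, smul_eq_mul]
      exact Or.inl rfl
    have hvarS : variance S P ≤ u θ ^ 2 / N := by
      rw [hSsum, variance_smul, hvarsum]
      have hsum : ∑ j ∈ Finset.range N, variance (Y j) P ≤ (N:ℝ) * u θ ^ 2 := by
        have := Finset.sum_le_card_nsmul (Finset.range N)
          (fun j => variance (Y j) P) (u θ ^ 2) (fun j _ => hVarY j)
        simpa [Finset.card_range, nsmul_eq_mul] using this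
      have h2 : ((N:ℝ)⁻¹) ^ 2 * ((N:ℝ) * u θ ^ 2) = u θ ^ 2 / N := by
        field_simp
      calc ((N:ℝ)⁻¹) ^ 2 * ∑ j ∈ Finset.range N, variance (Y j) P
          ≤ ((N:ℝ)⁻¹) ^ 2 * ((N:ℝ) * u θ ^ 2) :=
            mul_le_mul_of_nonneg_left hsum (by positivity)
        _ = u θ ^ 2 / N := h2
    have hE2 : ∫ ω, (S ω - Z θ) ^ 2 ∂P = variance S P := by
      rw [variance_eq_integral hSmem.aemeasurable]
      refine integral_congr_ae (Filter.Eventually.of_forall fun ω => ?_)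
      simp [hES]
    have hWmem : MemLp (fun ω => |S ω - Z θ|) 2 P :=
      (hSmem.sub (memLp_const (Z θ))).abs
    have habs2 : (∫ ω, |S ω - Z θ| ∂P) ^ 2 ≤ u θ ^ 2 / N := by
      have h0 := variance_nonneg (fun ω => |S ω - Z θ|) P
      rw [variance_eq_sub hWmem] at h0
      have e : ∫ ω, ((fun ω => |S ω - Z θ|) ^ 2) ω ∂P = ∫ ω, (S ω - Z θ) ^ 2 ∂P :=
        integral_congr_ae (Filter.Eventually.of_forall fun ω => by simp [sq_abs])
      rw [e, hE2] at h0
      linarith [hvarS]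
    have hintW : Integrable (fun ω => |S ω - Z θ|) P :=
      (hSint.sub (integrable_const _)).abs
    have hEabs : ∫ ω, |S ω - Z θ| ∂P ≤ u θ / Real.sqrt N := by
      have hnn : 0 ≤ ∫ ω, |S ω - Z θ| ∂P := integral_nonneg fun ω => abs_nonneg _
      have h1 := Real.sqrt_le_sqrt habs2
      rw [Real.sqrt_sq hnn] at h1
      have h2 : Real.sqrt (u θ ^ 2 / N) = u θ / Real.sqrt N := by
        rw [Real.sqrt_div (sq_nonneg _), Real.sqrt_sq (hupos θ).le]
      exact h2 ▸ h1
    calc ∫ ω, |Zt ω θ - Z θ| / Zt ω θ ∂P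
        ≤ ∫ ω, |S ω - Z θ| / ℓ θ ∂P := by
          refine integral_mono_of_nonneg
            (Filter.Eventually.of_forall fun ω => div_nonneg (abs_nonneg _) (hZtpos ω θ).le)
            (hintW.div_const _) (Filter.Eventually.of_forall fun ω => ?_)
          exact div_le_div_of_nonneg_left (abs_nonneg _) (hℓpos θ) (hZtb ω θ).1
      _ = (∫ ω, |S ω - Z θ| ∂P) / ℓ θ := integral_div _ _
      _ ≤ (u θ / Real.sqrt N) / ℓ θ := (div_le_div_iff_of_pos_right (hℓpos θ)).mpr hEabs
      _ = u θ / ℓ θ * (Real.sqrt N)⁻¹ := by ring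
  -- the function F
  set F : Ω → Θ → ℝ :=
    fun ω θ => (Real.exp (-Φ θ) / Z θ) * (|Zt ω θ - Z θ| / Zt ω θ) with hFdef
  have hFmeas : Measurable (Function.uncurry F) := by
    have h1 : Measurable (fun p : Ω × Θ => Real.exp (-Φ p.2) / Z p.2) :=
      hd₁.comp measurable_snd
    have h2 : Measurable (fun p : Ω × Θ => |Zt p.1 p.2 - Z p.2| / Zt p.1 p.2) :=
      ((hZNmeas.sub (hZmeas.comp measurable_snd)).abs).div hZNmeas
    exact h1.mul h2
  have hFnonneg : ∀ ω θ, 0 ≤ F ω θ := fun ω θ =>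
    mul_nonneg (hnn₁ θ) (div_nonneg (abs_nonneg _) (hZtpos ω θ).le)
  have hFb_int : Integrable (fun θ => (Real.exp (-Φ θ) / Z θ) * (u θ / ℓ θ)) μ :=
    (integrable_post_iff μ Φ Z hd₁ hnn₁ hC _).mp hul
  have hFle : ∀ ω θ, F ω θ ≤ (Real.exp (-Φ θ) / Z θ) * (u θ / ℓ θ) := by
    intro ω θ
    refine mul_le_mul_of_nonneg_left ?_ (hnn₁ θ)
    have h1 : |Zt ω θ - Z θ| ≤ u θ := by
      rw [abs_sub_le_iff]
      constructor
      · linarith [(hZtb ω θ).2, (hZb θ).1, (hℓpos θ)]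
      · linarith [(hZb θ).2, (hZtb ω θ).1, (hℓpos θ)]
    exact div_le_div₀ (hupos θ).le h1 (hℓpos θ) (hZtb ω θ).1
  have hFω_int : ∀ ω, Integrable (F ω) μ := by
    intro ω
    refine hFb_int.mono' ((hFmeas.comp measurable_prodMk_left).aestronglyMeasurable)
      (Filter.Eventually.of_forall fun θ => ?_)
    rw [Real.norm_eq_abs, abs_of_nonneg (hFnonneg ω θ)]
    exact hFle ω θ
  have hsm : StronglyMeasurable (fun ω => ∫ θ, F ω θ ∂μ) :=
    StronglyMeasurable.integral_prod_right (f := F) hFmeas.stronglyMeasurable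
  have hFint2 : Integrable (fun ω => ∫ θ, F ω θ ∂μ) P := by
    refine (integrable_const (∫ θ, (Real.exp (-Φ θ) / Z θ) * (u θ / ℓ θ) ∂μ)).mono'
      hsm.aestronglyMeasurable (Filter.Eventually.of_forall fun ω => ?_)
    rw [Real.norm_eq_abs, abs_of_nonneg (integral_nonneg (hFnonneg ω))]
    exact integral_mono (hFω_int ω) hFb_int (hFle ω)
  have hFprod : Integrable (Function.uncurry F) (P.prod μ) := by
    refine (integrable_prod_iff hFmeas.aestronglyMeasurable).mpr
      ⟨Filter.Eventually.of_forall hFω_int, ?_⟩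
    refine hFint2.congr (Filter.Eventually.of_forall fun ω => ?_)
    refine integral_congr_ae (Filter.Eventually.of_forall fun θ => ?_)
    simp [Function.uncurry, Real.norm_eq_abs, abs_of_nonneg (hFnonneg ω θ)]
  have hswap : ∫ ω, ∫ θ, F ω θ ∂μ ∂P = ∫ θ, ∫ ω, F ω θ ∂P ∂μ :=
    integral_integral_swap hFprod
  have hmarg : Integrable (fun θ => ∫ ω, F ω θ ∂P) μ := hFprod.integral_prod_right
  -- pointwise tv bound
  have hmain : ∀ ω, tvDist (post μ Φ Z) (post μ Φ (Zt ω))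
      ≤ 2 / CZ μ Φ Z * ∫ θ, F ω θ ∂μ := by
    intro ω
    refine (tvDist_post_le μ Φ Z (Zt ω) hd₁ (hd₂ ω) hnn₁ (hnn₂ ω) hint (hintN ω)
      hC (hCN ω)).trans (le_of_eq ?_)
    congr 1
    refine integral_congr_ae (Filter.Eventually.of_forall fun θ => ?_)
    have hzne : Z θ ≠ 0 := (hZpos θ).ne'
    have hztne : Zt ω θ ≠ 0 := (hZtpos ω θ).ne'
    have heq : Real.exp (-Φ θ) / Z θ - Real.exp (-Φ θ) / Zt ω θ
        = (Real.exp (-Φ θ) / Z θ) * ((Zt ω θ - Z θ) / Zt ω θ) := by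
      field_simp
    show |Real.exp (-Φ θ) / Z θ - Real.exp (-Φ θ) / Zt ω θ| = F ω θ
    rw [heq, abs_mul, abs_of_nonneg (hnn₁ θ), abs_div, abs_of_pos (hZtpos ω θ)]
  by_cases htv : Integrable (fun ω => tvDist (post μ Φ Z) (post μ Φ (Zt ω))) P
  swap
  · rw [integral_undef htv]
    have h1 : 0 ≤ ∫ θ, u θ / ℓ θ ∂(post μ Φ Z) :=
      integral_nonneg fun θ => div_nonneg (hupos θ).le (hℓpos θ).le
    positivity
  calc ∫ ω, tvDist (post μ Φ Z) (post μ Φ (Zt ω)) ∂P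
      ≤ ∫ ω, 2 / CZ μ Φ Z * ∫ θ, F ω θ ∂μ ∂P :=
        integral_mono htv (hFint2.const_mul _) hmain
    _ = 2 / CZ μ Φ Z * ∫ θ, ∫ ω, F ω θ ∂P ∂μ := by
        rw [integral_const_mul, hswap]
    _ ≤ 2 / CZ μ Φ Z *
        ∫ θ, (Real.exp (-Φ θ) / Z θ) * (u θ / ℓ θ) * (Real.sqrt N)⁻¹ ∂μ := by
        refine mul_le_mul_of_nonneg_left ?_ (by positivity)
        refine integral_mono_of_nonneg
          (Filter.Eventually.of_forall fun θ => integral_nonneg fun ω => hFnonneg ω θ)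
          (hFb_int.mul_const _) (Filter.Eventually.of_forall fun θ => ?_)
        show ∫ ω, F ω θ ∂P
            ≤ (Real.exp (-Φ θ) / Z θ) * (u θ / ℓ θ) * (Real.sqrt N)⁻¹
        have h0 : ∫ ω, F ω θ ∂P
            = (Real.exp (-Φ θ) / Z θ) * ∫ ω, |Zt ω θ - Z θ| / Zt ω θ ∂P :=
          integral_const_mul _ _
        rw [h0]
        calc (Real.exp (-Φ θ) / Z θ) * ∫ ω, |Zt ω θ - Z θ| / Zt ω θ ∂P
            ≤ (Real.exp (-Φ θ) / Z θ) * (u θ / ℓ θ * (Real.sqrt N)⁻¹) :=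
              mul_le_mul_of_nonneg_left (hprob θ) (hnn₁ θ)
          _ = (Real.exp (-Φ θ) / Z θ) * (u θ / ℓ θ) * (Real.sqrt N)⁻¹ := by ring
    _ = 2 / Real.sqrt N * ∫ θ, u θ / ℓ θ ∂(post μ Φ Z) := by
        rw [integral_post_eq μ Φ Z hd₁ hnn₁ hC, integral_mul_const]
        ring
end
end
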